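/- If there exists a word over {1,...,n-1} of length m containing all permutations of length n-1 as factors, then there exists a word over {1,...,n} of length n! + m containing all permutations of length n as factors. -/

import Mathlib

/-!
For every permutation `p` of `{1, …, n-1}`, pick an occurrence of `p` in `w` and replace it by
`p ++ n :: p`. Each insertion adds `n` letters and keeps every factor of length at most `n`,
since such a factor lies either in the prefix ending with the first copy of `p` or in the suffix
starting with the second one. Every permutation `x ++ n :: y` of `{1, …, n}` is a factor of
`p ++ n :: p` for the rotation `p = y ++ x`, and the `(n-1)!` insertions add `n!` letters.
-/

/-- `w` is a permutation of length `n`: a word on `{1,...,n}` with each letter occurring once. -/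
def IsPermWord (n : Nat) (w : List Nat) : Prop :=
  w.length = n ∧ w.Nodup ∧ ∀ x ∈ w, 1 ≤ x ∧ x ≤ n

namespace List

variable {α : Type*}

theorem IsInfix.insert_copy {f a p b : List α} (c : α) (hf : f <:+: a ++ p ++ b)
    (hlen : f.length ≤ p.length + 1) : f <:+: a ++ p ++ c :: p ++ b := by
  obtain ⟨s, t, hst⟩ := hf
  have hlen' := congrArg length hst
  simp only [length_append] at hlen'
  by_cases h : s.length + f.length ≤ a.length + p.length
  · have hpre : s ++ f <+: a ++ p :=
      prefix_of_prefix_length_le ⟨t, by simpa using hst⟩ ⟨b, rfl⟩ (by simpa using h)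
    obtain ⟨r, hr⟩ := hpre
    exact ⟨s, r ++ c :: p ++ b, by simp [← hr]⟩
  · have hsuf : f ++ t <:+ p ++ b :=
      suffix_of_suffix_length_le ⟨s, by simpa using hst⟩ ⟨a, by simp⟩ (by simp; omega)
    obtain ⟨r, hr⟩ := hsuf
    exact ⟨a ++ p ++ c :: r, t, by simp [← hr]⟩

theorem exists_insert_copy_of_infix {p v : List α} (c : α) (hp : p <:+: v) :
    ∃ v', v' ⊆ c :: v ∧ v'.length = v.length + (p.length + 1) ∧
      (∀ f, f.length ≤ p.length + 1 → f <:+: v → f <:+: v') ∧ p ++ c :: p <:+: v' := by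
  obtain ⟨s, t, rfl⟩ := hp
  refine ⟨s ++ p ++ c :: p ++ t, fun x hx => ?_, by simp; omega,
    fun f hf hfv => hfv.insert_copy c hf, ⟨s, t, by simp⟩⟩
  simp only [mem_append, mem_cons] at hx ⊢
  tauto

theorem exists_insert_copies (c : α) (k : ℕ) (P : List (List α)) (v : List α)
    (hP : ∀ p ∈ P, p.length = k ∧ p <:+: v) :
    ∃ v', v' ⊆ c :: v ∧ v'.length = v.length + (k + 1) * P.length ∧
      (∀ f, f.length ≤ k + 1 → f <:+: v → f <:+: v') ∧
      ∀ p ∈ P, ∀ q, q.length ≤ k + 1 → q <:+: p ++ c :: p → q <:+: v' := by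
  induction P generalizing v with
  | nil => exact ⟨v, subset_cons_self c v, by simp, fun _ _ h => h, by simp⟩
  | cons p P ih =>
    obtain ⟨hpk, hpv⟩ := hP p mem_cons_self
    obtain ⟨v₁, hsub₁, hlen₁, hkeep₁, hblock⟩ := exists_insert_copy_of_infix c hpv
    rw [hpk] at hlen₁ hkeep₁
    obtain ⟨v', hsub', hlen', hkeep', hcover'⟩ := ih v₁ fun p' hp' =>
      have hp'k := hP p' (mem_cons_of_mem p hp')
      ⟨hp'k.1, hkeep₁ p' (by omega) hp'k.2⟩
    refine ⟨v', fun x hx => ?_, by simp [hlen', hlen₁]; ring,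
      fun f hf hfv => hkeep' f hf (hkeep₁ f hf hfv), ?_⟩
    · rcases mem_cons.mp (hsub' hx) with rfl | hx₁
      · exact mem_cons_self
      · exact hsub₁ hx₁
    · rintro p' (_ | ⟨_, hp'⟩) q hq hqp'
      · exact hkeep' q hq (hqp'.trans hblock)
      · exact hcover' p' hp' q hq hqp'

end List

theorem isPermWord_iff_perm {k : ℕ} {p : List ℕ} : IsPermWord k p ↔ p.Perm (List.range' 1 k) := by
  constructor
  · rintro ⟨hlen, hnodup, hmem⟩
    refine (List.subperm_of_subset hnodup fun x hx => ?_).perm_of_length_le (by simp [hlen])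
    have := hmem x hx
    exact List.mem_range'_1.mpr (by omega)
  · intro h
    refine ⟨by simp [h.length_eq], h.nodup_iff.mpr List.nodup_range', fun x hx => ?_⟩
    have := List.mem_range'_1.mp (h.subset hx)
    omega

theorem IsPermWord.exists_rotation {n : ℕ} {q : List ℕ} (hn : 1 ≤ n) (hq : IsPermWord n q) :
    ∃ p, IsPermWord (n - 1) p ∧ q <:+: p ++ n :: p := by
  obtain ⟨k, rfl⟩ : ∃ k, n = k + 1 := ⟨n - 1, by omega⟩
  have hperm : q.Perm (List.range' 1 k ++ [k + 1]) := by
    have hrange := List.range'_1_concat (s := 1) (n := k)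
    rw [add_comm 1 k] at hrange
    exact hrange ▸ isPermWord_iff_perm.mp hq
  obtain ⟨x, y, rfl⟩ := List.append_of_mem (hperm.mem_iff.mpr (List.mem_concat_self ..))
  refine ⟨y ++ x, isPermWord_iff_perm.mpr ?_, ⟨y, x, by simp⟩⟩
  have hcons : ((k + 1) :: (y ++ x)).Perm ((k + 1) :: List.range' 1 k) :=
    (List.perm_append_comm.cons _).trans <| List.perm_middle.symm.trans <|
      hperm.trans (List.perm_append_singleton _ _)
  simpa using hcons.cons_inv

theorem superpermutation_recursive_construction (n m : Nat) (hn : 1 ≤ n) (w : List Nat)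
    (halpha : ∀ x ∈ w, 1 ≤ x ∧ x ≤ n - 1) (hlen : w.length = m)
    (huniv : ∀ p : List Nat, IsPermWord (n - 1) p → p <:+: w) :
    ∃ w' : List Nat, (∀ x ∈ w', 1 ≤ x ∧ x ≤ n) ∧ w'.length = n.factorial + m ∧
      ∀ p : List Nat, IsPermWord n p → p <:+: w' := by
  set P := (List.range' 1 (n - 1)).permutations
  have hP (p : List ℕ) : p ∈ P ↔ IsPermWord (n - 1) p :=
    List.mem_permutations.trans isPermWord_iff_perm.symm
  obtain ⟨w', hsub, hlen', -, hcover⟩ := List.exists_insert_copies n (n - 1) P w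
    fun p hp => ⟨((hP p).1 hp).1, huniv p ((hP p).1 hp)⟩
  refine ⟨w', fun x hx => ?_, ?_, fun q hq => ?_⟩
  · rcases List.mem_cons.mp (hsub hx) with rfl | hx
    · omega
    · have := halpha x hx
      omega
  · rw [hlen', List.length_permutations, List.length_range', Nat.sub_add_cancel hn,
      Nat.mul_factorial_pred (by omega), hlen, add_comm]
  · obtain ⟨p, hp, hqp⟩ := hq.exists_rotation hn
    exact hcover p ((hP p).2 hp) q (by rw [hq.1, Nat.sub_add_cancel hn]) hqp
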